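/- Let A be a commutative local principal ideal ring with maximal ideal (π), and let α ∈ GL_3(A) reduce modulo π to the permutation matrix of the transposition s₁ = (1 2) (i.e., the matrix [[0,1,0],[1,0,0],[0,0,1]]). Then α lies in the same double coset (for the upper triangular subgroup B) as a matrix of the form [[0,1,0],[1,0,0],[π^i, π^j, 1]] for some 1 ≤ i, j ≤ k, where k is the length of A (with the convention π^k = 0). -/

import Mathlib

/-! Entrywise, `b * ᾱ * c = s₁` with `b`, `c` upper triangular forces `α 2 0, α 2 1 ∈ 𝔪` and
`α 1 0` to be a unit. Column operations pivoting on `α 1 0` clear the middle row; the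
determinant then shows that the `(2, 2)` entry is a unit, and row operations pivoting on it and
on `α 1 0` clear the top row except for its middle entry. This leaves
`!![0, y, 0; x, 0, 0; a, b, z]` with `x, y, z` units and `a, b ∈ 𝔪 = (π)`. Every element of `𝔪`
is `ε * π ^ i` with `ε` a unit and `1 ≤ i ≤ k` (take `i` maximal with `π ^ i ∣ a`, capped at
`k`), and a diagonal change of rows and columns absorbs all the units. -/

open Matrix

/-- A matrix is invertible upper triangular. -/
def IsUT {A : Type*} [CommRing A] {n : ℕ} (M : Matrix (Fin n) (Fin n) A) : Prop :=
  M.BlockTriangular id ∧ IsUnit M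

/-- Two matrices lie in the same double coset for the subgroup of invertible
upper triangular matrices. -/
def SameDC {A : Type*} [CommRing A] {n : ℕ} (α α' : Matrix (Fin n) (Fin n) A) : Prop :=
  ∃ b c : Matrix (Fin n) (Fin n) A, IsUT b ∧ IsUT c ∧ b * α * c = α'

open IsLocalRing

section CommRing

variable {R : Type*} [CommRing R] {n : ℕ}

theorem IsUT.one : IsUT (1 : Matrix (Fin n) (Fin n) R) :=
  ⟨blockTriangular_one, isUnit_one⟩

theorem IsUT.mul {M N : Matrix (Fin n) (Fin n) R} (hM : IsUT M) (hN : IsUT N) : IsUT (M * N) :=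
  ⟨hM.1.mul hN.1, hM.2.mul hN.2⟩

theorem IsUT.isUnit_apply_self {M : Matrix (Fin n) (Fin n) R} (hM : IsUT M) (i : Fin n) :
    IsUnit (M i i) := by
  have h := (isUnit_iff_isUnit_det M).1 hM.2
  rw [det_of_isUpperTriangular hM.1, IsUnit.prod_univ_iff] at h
  exact h i

theorem isUT_fin_three {a b c d e f : R} (ha : IsUnit a) (hd : IsUnit d) (hf : IsUnit f) :
    IsUT !![a, b, c; 0, d, e; 0, 0, f] := by
  have hT : (!![a, b, c; 0, d, e; 0, 0, f]).BlockTriangular id := by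
    intro i j hij
    fin_cases i <;> fin_cases j <;> simp_all
  refine ⟨hT, (isUnit_iff_isUnit_det _).2 ?_⟩
  rw [det_of_isUpperTriangular hT, Fin.prod_univ_three]
  simpa using (ha.mul hd).mul hf

theorem SameDC.trans {M N P : Matrix (Fin n) (Fin n) R} (h₁ : SameDC M N) (h₂ : SameDC N P) :
    SameDC M P := by
  obtain ⟨b, c, hb, hc, rfl⟩ := h₁
  obtain ⟨b', c', hb', hc', rfl⟩ := h₂
  exact ⟨b' * b, c * c', hb'.mul hb, hc.mul hc', by simp only [Matrix.mul_assoc]⟩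

theorem SameDC.isUnit_iff {M N : Matrix (Fin n) (Fin n) R} (h : SameDC M N) :
    IsUnit M ↔ IsUnit N := by
  obtain ⟨b, c, hb, hc, rfl⟩ := h
  rw [← hb.2.unit_spec, ← hc.2.unit_spec, Units.isUnit_mul_units, Units.isUnit_units_mul]

theorem entries_of_sameDC_s₁ {M : Matrix (Fin 3) (Fin 3) R}
    (h : SameDC M !![0, 1, 0; 1, 0, 0; 0, 0, 1]) :
    M 2 0 = 0 ∧ M 2 1 = 0 ∧ IsUnit (M 1 0) := by
  obtain ⟨b, c, hb, hc, hbc⟩ := h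
  have lower {T : Matrix (Fin 3) (Fin 3) R} (hT : IsUT T) :
      T 1 0 = 0 ∧ T 2 0 = 0 ∧ T 2 1 = 0 :=
    ⟨hT.1 (by decide), hT.1 (by decide), hT.1 (by decide)⟩
  obtain ⟨hb10, hb20, hb21⟩ := lower hb
  obtain ⟨hc10, hc20, hc21⟩ := lower hc
  have entry (i j : Fin 3) := congrFun (congrFun hbc i) j
  have e20 : b 2 2 * M 2 0 * c 0 0 = 0 := by
    simpa [mul_apply, Fin.sum_univ_three, hb20, hb21, hc10, hc20, mul_assoc] using entry 2 0
  have e21 : b 2 2 * M 2 0 * c 0 1 + b 2 2 * M 2 1 * c 1 1 = 0 := by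
    simpa [mul_apply, Fin.sum_univ_three, hb20, hb21, hc10, hc20, hc21] using entry 2 1
  have e10 : (b 1 1 * M 1 0 + b 1 2 * M 2 0) * c 0 0 = 1 := by
    simpa [mul_apply, Fin.sum_univ_three, hb10, hb20, hb21, hc10, hc20, add_mul] using entry 1 0
  have h20 : M 2 0 = 0 := (hb.isUnit_apply_self 2).mul_right_eq_zero.1
    ((hc.isUnit_apply_self 0).mul_left_eq_zero.1 e20)
  have h21 : M 2 1 = 0 := by
    rw [h20, mul_zero, zero_mul, zero_add] at e21
    exact (hb.isUnit_apply_self 2).mul_right_eq_zero.1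
      ((hc.isUnit_apply_self 1).mul_left_eq_zero.1 e21)
  rw [h20, mul_zero, add_zero] at e10
  exact ⟨h20, h21, isUnit_of_mul_isUnit_right (IsUnit.of_mul_eq_one _ e10)⟩

theorem sameDC_clear_middle_row (M : Matrix (Fin 3) (Fin 3) R) {u : R} (hu : u * M 1 0 = 1) :
    SameDC M !![M 0 0, M 0 1 - M 0 0 * u * M 1 1, M 0 2 - M 0 0 * u * M 1 2;
      M 1 0, 0, 0;
      M 2 0, M 2 1 - M 2 0 * u * M 1 1, M 2 2 - M 2 0 * u * M 1 2] := by
  refine ⟨1, !![1, -(u * M 1 1), -(u * M 1 2); 0, 1, 0; 0, 0, 1], IsUT.one,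
    isUT_fin_three isUnit_one isUnit_one isUnit_one, ?_⟩
  rw [Matrix.one_mul]
  nth_rw 1 [eta_fin_three M]
  rw [mul_fin_three]
  simp only [EmbeddingLike.apply_eq_iff_eq, vecCons_inj, and_true]
  grind

theorem sameDC_clear_top_row {p q r x a b z u w : R} (hu : u * x = 1) (hw : w * z = 1) :
    SameDC !![p, q, r; x, 0, 0; a, b, z] !![0, q - r * w * b, 0; x, 0, 0; a, b, z] := by
  refine ⟨!![1, -((p - r * w * a) * u), -(r * w); 0, 1, 0; 0, 0, 1], 1,
    isUT_fin_three isUnit_one isUnit_one isUnit_one, IsUT.one, ?_⟩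
  rw [Matrix.mul_one, mul_fin_three]
  simp only [EmbeddingLike.apply_eq_iff_eq, vecCons_inj, and_true]
  grind

theorem sameDC_normalize_antidiag {x y z e f a b : R} (hx : IsUnit x) (hy : IsUnit y)
    (hz : IsUnit z) (he : IsUnit e) (hf : IsUnit f) :
    SameDC !![0, y, 0; x, 0, 0; e * a, f * b, z] !![0, 1, 0; 1, 0, 0; a, b, 1] := by
  obtain ⟨x', hx'⟩ := hx.exists_left_inv
  obtain ⟨y', hy'⟩ := hy.exists_left_inv
  obtain ⟨z', hz'⟩ := hz.exists_left_inv
  obtain ⟨e', he'⟩ := he.exists_left_inv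
  obtain ⟨f', hf'⟩ := hf.exists_left_inv
  have inv_isUnit {s s' : R} (h : s' * s = 1) : IsUnit s' := .of_mul_eq_one _ h
  refine ⟨!![y' * f * z', 0, 0; 0, x' * e * z', 0; 0, 0, z'],
    !![z * e', 0, 0; 0, z * f', 0; 0, 0, 1],
    isUT_fin_three (((inv_isUnit hy').mul hf).mul (inv_isUnit hz'))
      (((inv_isUnit hx').mul he).mul (inv_isUnit hz')) (inv_isUnit hz'),
    isUT_fin_three (hz.mul (inv_isUnit he')) (hz.mul (inv_isUnit hf')) isUnit_one, ?_⟩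
  rw [mul_fin_three, mul_fin_three]
  simp only [EmbeddingLike.apply_eq_iff_eq, vecCons_inj, and_true]
  grind

theorem det_fin_three_middle_row_single (p q r x a b z : R) :
    det !![p, q, r; x, 0, 0; a, b, z] = -(x * (q * z - r * b)) := by
  simp only [det_fin_three, of_apply, cons_val', cons_val_zero, cons_val_one, cons_val,
    cons_val_fin_one, mul_zero, zero_mul, sub_self, zero_sub, add_zero, sub_zero]
  ring

end CommRing

section LocalRing

variable {A : Type*} [CommRing A] [IsLocalRing A]

theorem exists_sameDC_antidiag {M : Matrix (Fin 3) (Fin 3) A} (hM : IsUnit M)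
    (h20 : M 2 0 ∈ maximalIdeal A) (h21 : M 2 1 ∈ maximalIdeal A) (h10 : IsUnit (M 1 0)) :
    ∃ y z b, IsUnit y ∧ IsUnit z ∧ b ∈ maximalIdeal A ∧
      SameDC M !![0, y, 0; M 1 0, 0, 0; M 2 0, b, z] := by
  obtain ⟨u, hu⟩ := h10.exists_left_inv
  obtain ⟨p, q, r, b, z, hb, h₁⟩ : ∃ p q r b z, b ∈ maximalIdeal A ∧
      SameDC M !![p, q, r; M 1 0, 0, 0; M 2 0, b, z] :=
    ⟨_, _, _, _, _, sub_mem h21 (Ideal.mul_mem_right _ _ (Ideal.mul_mem_right _ _ h20)),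
      sameDC_clear_middle_row M hu⟩
  have hqz : IsUnit (q * z - r * b) := by
    have h := (isUnit_iff_isUnit_det _).1 (h₁.isUnit_iff.1 hM)
    rw [det_fin_three_middle_row_single, IsUnit.neg_iff] at h
    exact isUnit_of_mul_isUnit_right h
  have hz : IsUnit z := by
    by_contra hz
    refine (mem_maximalIdeal _).1 ?_ hqz
    exact sub_mem (Ideal.mul_mem_left _ _ ((mem_maximalIdeal _).2 hz))
      (Ideal.mul_mem_left _ _ hb)
  obtain ⟨w, hw⟩ := hz.exists_left_inv
  have hy : IsUnit (q - r * w * b) := by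
    refine isUnit_of_mul_isUnit_left (y := z) ?_
    convert hqz using 1
    linear_combination (-(r * b)) * hw
  exact ⟨_, z, b, hy, hz, hb, h₁.trans (sameDC_clear_top_row hu hw)⟩

theorem exists_eq_unit_mul_pow {π : A} {k : ℕ}
    (hmax : maximalIdeal A = Ideal.span {π}) (hk : π ^ k = 0) {a : A}
    (ha : a ∈ maximalIdeal A) : ∃ i, 1 ≤ i ∧ i ≤ k ∧ ∃ ε : Aˣ, a = ε * π ^ i := by
  classical
  have hk1 : 1 ≤ k := Nat.one_le_iff_ne_zero.2 (by rintro rfl; simp at hk)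
  rw [hmax, Ideal.mem_span_singleton] at ha
  set i := Nat.findGreatest (fun n => π ^ n ∣ a) k
  have hπa : π ^ 1 ∣ a := by rwa [pow_one]
  have hi1 : 1 ≤ i := Nat.le_findGreatest hk1 hπa
  have hik : i ≤ k := Nat.findGreatest_le k
  refine ⟨i, hi1, hik, ?_⟩
  obtain ⟨y, hya⟩ : π ^ i ∣ a := Nat.findGreatest_spec (P := fun n => π ^ n ∣ a) hk1 hπa
  rcases hik.lt_or_eq with hlt | heq
  · have hy : IsUnit y := by
      by_contra hy
      have hπy : π ∣ y := by
        rw [← Ideal.mem_span_singleton, ← hmax]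
        exact (mem_maximalIdeal y).2 hy
      refine Nat.findGreatest_is_greatest (Nat.lt_succ_self i) hlt ?_
      rw [hya, pow_succ]
      exact mul_dvd_mul_left _ hπy
    exact ⟨hy.unit, hya.trans (mul_comm _ _)⟩
  · exact ⟨1, by rw [hya, heq, hk]; simp⟩

end LocalRing

theorem stmt13_general {A : Type*} [CommRing A] [IsLocalRing A]
    (π : A) (k : ℕ) (hmax : IsLocalRing.maximalIdeal A = Ideal.span {π})
    (hk0 : π ^ k = 0)
    (α : Matrix (Fin 3) (Fin 3) A) (hα : IsUnit α)
    (hred : SameDC (α.map (Ideal.Quotient.mk (IsLocalRing.maximalIdeal A)))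
      !![0, 1, 0; 1, 0, 0; 0, 0, 1]) :
    ∃ i j : ℕ, 1 ≤ i ∧ i ≤ k ∧ 1 ≤ j ∧ j ≤ k ∧
      SameDC α !![0, 1, 0; 1, 0, 0; π ^ i, π ^ j, 1] := by
  obtain ⟨hq20, hq21, hq10⟩ := entries_of_sameDC_s₁ hred
  have h20 : α 2 0 ∈ maximalIdeal A := Ideal.Quotient.eq_zero_iff_mem.1 hq20
  have h10 : IsUnit (α 1 0) := (isUnit_map_iff (residue A) _).1 hq10
  obtain ⟨y, z, b, hy, hz, hb, hαN⟩ :=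
    exists_sameDC_antidiag hα h20 (Ideal.Quotient.eq_zero_iff_mem.1 hq21) h10
  obtain ⟨i, hi1, hik, ε, hε⟩ := exists_eq_unit_mul_pow hmax hk0 h20
  obtain ⟨j, hj1, hjk, δ, hδ⟩ := exists_eq_unit_mul_pow hmax hk0 hb
  refine ⟨i, j, hi1, hik, hj1, hjk, hαN.trans ?_⟩
  rw [hε, hδ]
  exact sameDC_normalize_antidiag h10 hy hz ε.isUnit δ.isUnit

theorem stmt13 {A : Type*} [CommRing A] [IsLocalRing A] [IsPrincipalIdealRing A]
    (π : A) (k : ℕ) (hmax : IsLocalRing.maximalIdeal A = Ideal.span {π})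
    (hk0 : π ^ k = 0) (hk1 : π ^ (k - 1) ≠ 0)
    (α : Matrix (Fin 3) (Fin 3) A) (hα : IsUnit α)
    (hred : SameDC (α.map (Ideal.Quotient.mk (IsLocalRing.maximalIdeal A)))
      !![0, 1, 0; 1, 0, 0; 0, 0, 1]) :
    ∃ i j : ℕ, 1 ≤ i ∧ i ≤ k ∧ 1 ≤ j ∧ j ≤ k ∧
      SameDC α !![0, 1, 0; 1, 0, 0; π ^ i, π ^ j, 1] :=
  stmt13_general π k hmax hk0 α hα hred
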